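/- arXiv:2306.14498 — 2 statements merged into one kernel-verified Lean document; each statement's English description precedes it below -/
import Mathlib

section
/- Let m_u and m_r be natural numbers with 1 ≤ m_u ≤ m_r. Then the number of natural numbers d with d ≤ m_u + m_r − 2 for which the consistent set S_d is the full set {0, …, m_u − 1} (i.e. |S_d| = m_u) equals m_r − m_u + 1. -/
/-!
The input `u` is consistent with `d` exactly when `u ≤ d < u + m_r`. Hence `S_d` is the whole of
`{0, …, m_u − 1}` iff both extreme inputs `0` and `m_u − 1` are consistent, i.e. iff
`m_u − 1 ≤ d < m_r`: an interval of `m_r − m_u + 1` values, all below `m_u + m_r − 1`.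
-/

/-- The consistent set `S_d = {u ∈ {0,…,m_u−1} : ∃ r ∈ {0,…,m_r−1}, u + r = d}`:
the set of private inputs compatible with the revealed masked value `d`. -/
def consistentSet (m_u m_r d : ℕ) : Finset ℕ :=
  (Finset.range m_u).filter (fun u => ∃ r ∈ Finset.range m_r, u + r = d)

open Finset

theorem mem_consistentSet {m_u m_r d u : ℕ} :
    u ∈ consistentSet m_u m_r d ↔ u < m_u ∧ u ≤ d ∧ d < u + m_r := by
  simp only [consistentSet, mem_filter, mem_range]
  constructor
  · rintro ⟨hu, r, hr, rfl⟩
    omega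
  · rintro ⟨hu, hud, hdu⟩
    exact ⟨hu, d - u, by omega, by omega⟩

theorem consistentSet_subset_range (m_u m_r d : ℕ) : consistentSet m_u m_r d ⊆ range m_u :=
  filter_subset _ _

theorem card_consistentSet_eq_iff {m_u m_r d : ℕ} :
    #(consistentSet m_u m_r d) = m_u ↔ consistentSet m_u m_r d = range m_u := by
  have hle : #(consistentSet m_u m_r d) ≤ m_u :=
    (card_le_card (consistentSet_subset_range m_u m_r d)).trans_eq (card_range m_u)
  rw [← eq_iff_card_le_of_subset (consistentSet_subset_range m_u m_r d), card_range]
  omega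

theorem consistentSet_eq_range_iff {m_u m_r d : ℕ} (hm : 0 < m_u) :
    consistentSet m_u m_r d = range m_u ↔ d ∈ Ico (m_u - 1) m_r := by
  rw [mem_Ico]
  constructor
  · intro h
    have hfirst := mem_consistentSet.1 (h ▸ mem_range.2 hm : 0 ∈ consistentSet m_u m_r d)
    have hlast := mem_consistentSet.1
      (h ▸ mem_range.2 (Nat.sub_lt hm one_pos) : m_u - 1 ∈ consistentSet m_u m_r d)
    omega
  · intro hd
    ext u
    rw [mem_consistentSet, mem_range]
    omega

/-- The number of natural numbers `d ≤ m_u + m_r − 2` for which the consistent set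
`S_d` is the full set `{0,…,m_u−1}` (i.e. `|S_d| = m_u`) equals `m_r − m_u + 1`. -/
theorem consistentSet_full_count (m_u m_r : ℕ) (h1 : 1 ≤ m_u) (h2 : m_u ≤ m_r) :
    ((Finset.range (m_u + m_r - 1)).filter
        (fun d => (consistentSet m_u m_r d).card = m_u)).card = m_r - m_u + 1 := by
  have hfull : (range (m_u + m_r - 1)).filter (fun d => #(consistentSet m_u m_r d) = m_u) =
      Ico (m_u - 1) m_r := by
    ext d
    simp only [mem_filter, mem_range, card_consistentSet_eq_iff, consistentSet_eq_range_iff h1,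
      mem_Ico]
    omega
  rw [hfull, Nat.card_Ico]
  omega
end

section
/- Let m_u and m_r be natural numbers with 1 ≤ m_u ≤ m_r, and let k be a natural number with 1 ≤ k ≤ m_u − 1. Then the number of natural numbers d with d ≤ m_u + m_r − 2 for which |S_d| = k equals exactly 2 (namely d = k − 1 and d = m_u + m_r − 1 − k). -/
theorem consistentSet_eq_Ico (m_u m_r d : ℕ) :
    consistentSet m_u m_r d = Finset.Ico (d + 1 - m_r) (min m_u (d + 1)) := by
  ext u
  simp only [consistentSet, Finset.mem_filter, Finset.mem_range, Finset.mem_Ico, lt_min_iff]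
  constructor
  · rintro ⟨hu, r, hr, rfl⟩
    omega
  · rintro ⟨hlo, hu, hud⟩
    exact ⟨hu, d - u, by omega, by omega⟩

theorem card_consistentSet (m_u m_r d : ℕ) :
    (consistentSet m_u m_r d).card = min m_u (d + 1) - (d + 1 - m_r) := by
  rw [consistentSet_eq_Ico, Nat.card_Ico]

theorem card_consistentSet_eq_iff_s8 {m_u m_r k d : ℕ} (hmr : m_u ≤ m_r) (hk : 1 ≤ k)
    (hkm : k < m_u) :
    (consistentSet m_u m_r d).card = k ↔ d = k - 1 ∨ d = m_u + m_r - 1 - k := by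
  rw [card_consistentSet]
  omega

theorem consistentSet_card_eq_k_count_general (m_u m_r k : ℕ) (h2 : m_u ≤ m_r)
    (hk1 : 1 ≤ k) (hk2 : k ≤ m_u - 1) :
    ((Finset.range (m_u + m_r - 1)).filter
        (fun d => (consistentSet m_u m_r d).card = k)).card = 2 ∧
    ((Finset.range (m_u + m_r - 1)).filter
        (fun d => (consistentSet m_u m_r d).card = k))
      = {k - 1, m_u + m_r - 1 - k} := by
  have hset : (Finset.range (m_u + m_r - 1)).filter
      (fun d => (consistentSet m_u m_r d).card = k) = {k - 1, m_u + m_r - 1 - k} := by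
    ext d
    simp only [Finset.mem_filter, Finset.mem_range, Finset.mem_insert, Finset.mem_singleton,
      card_consistentSet_eq_iff_s8 h2 hk1 (by omega : k < m_u)]
    omega
  exact ⟨by rw [hset, Finset.card_pair (by omega)], hset⟩

/-- For `1 ≤ k ≤ m_u − 1`, the number of natural numbers `d ≤ m_u + m_r − 2` for
which `|S_d| = k` equals exactly 2, namely `d = k − 1` and `d = m_u + m_r − 1 − k`. -/
theorem consistentSet_card_eq_k_count (m_u m_r k : ℕ) (h1 : 1 ≤ m_u) (h2 : m_u ≤ m_r)
    (hk1 : 1 ≤ k) (hk2 : k ≤ m_u - 1) :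
    ((Finset.range (m_u + m_r - 1)).filter
        (fun d => (consistentSet m_u m_r d).card = k)).card = 2 ∧
    ((Finset.range (m_u + m_r - 1)).filter
        (fun d => (consistentSet m_u m_r d).card = k))
      = {k - 1, m_u + m_r - 1 - k} :=
  consistentSet_card_eq_k_count_general m_u m_r k h2 hk1 hk2
end
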